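/- Suppose the nonnegative 3×3 channel strength matrix α satisfies conditions (C1) and (C2), that α_{12} = max_{l≠m} α_{lm}, that α_{31} ≤ max(α_{23}, α_{32}), and that α_{23} ≤ max(α_{13}, α_{31}). Then D = F̂_{123}. -/
import Mathlib


/-- `δ_i = max_m α_{im}`. -/
noncomputable def deltaI (α : Fin 3 → Fin 3 → ℝ) (i : Fin 3) : ℝ :=
  ⨆ m : Fin 3, α i m

/-- `δ_{i,j} = max_m (α_{im} − α_{jm})⁺`. -/
noncomputable def deltaIJ (α : Fin 3 → Fin 3 → ℝ) (i j : Fin 3) : ℝ :=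
  ⨆ m : Fin 3, max (α i m - α j m) 0

/-- `δ`: the minimum over all orderings `(i,j,k)` of `{1,2,3}` of
`min(δ_i + δ_{j,i} + δ_{k,j}, (δ_i + δ_k + δ_{i,j} + δ_{j,i} + δ_{j,k} + δ_{k,i})/2)`. -/
noncomputable def deltaTot (α : Fin 3 → Fin 3 → ℝ) : ℝ :=
  ⨅ p : Equiv.Perm (Fin 3),
    min (deltaI α (p 0) + deltaIJ α (p 1) (p 0) + deltaIJ α (p 2) (p 1))
      ((deltaI α (p 0) + deltaI α (p 2) + deltaIJ α (p 0) (p 1) +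
        deltaIJ α (p 1) (p 0) + deltaIJ α (p 1) (p 2) + deltaIJ α (p 2) (p 0)) / 2)

/-- The GDoF region `D`. -/
noncomputable def Dregion (α : Fin 3 → Fin 3 → ℝ) : Set (Fin 3 → ℝ) :=
  { d | (∀ i : Fin 3, 0 ≤ d i ∧ d i ≤ deltaI α i) ∧
        (∀ i k : Fin 3, i ≠ k →
          d i + d k ≤ min (deltaI α i + deltaIJ α k i) (deltaI α k + deltaIJ α i k)) ∧
        d 0 + d 1 + d 2 ≤ deltaTot α }

/-- Condition (C1): `max(α_{im}, α_{ki}) ≤ α_{ii}`. -/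
def CondC1 (α : Fin 3 → Fin 3 → ℝ) : Prop :=
  ∀ i k m : Fin 3, max (α i m) (α k i) ≤ α i i

/-- Condition (C2): `α_{ki} + α_{im} ≤ α_{ii} + α_{km}`. -/
def CondC2 (α : Fin 3 → Fin 3 → ℝ) : Prop :=
  ∀ i k m : Fin 3, α k i + α i m ≤ α i i + α k m

/-- `max_{l≠m} α_{lm}`: the largest cross-channel strength. -/
noncomputable def maxCross (α : Fin 3 → Fin 3 → ℝ) : ℝ :=
  max (α 0 1) (max (α 0 2) (max (α 1 0) (max (α 1 2) (max (α 2 0) (α 2 1)))))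

/-- The region `D̂_{ijk}` for an ordering `(i,j,k)` of the three users
(defined to be empty unless `max_{l≠m} α_{lm} ≤ min(α_{ii}, α_{jj})`). -/
noncomputable def Dhat (α : Fin 3 → Fin 3 → ℝ) (i j k : Fin 3) : Set (Fin 3 → ℝ) :=
  if maxCross α ≤ min (α i i) (α j j) then
    { d | 0 ≤ d 0 ∧ 0 ≤ d 1 ∧ 0 ≤ d 2 ∧
          d 0 ≤ α 0 0 ∧ d 1 ≤ α 1 1 ∧ d 2 ≤ α 2 2 ∧
          d i + d j ≤ α i i + α j j - maxCross α ∧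
          d i + d k ≤ α i i + α k k - max (α j k) (max (α k j) (max (α k i) (α i k))) ∧
          d j + d k ≤ α j j + α k k - max (α j k) (α k j) ∧
          d 0 + d 1 + d 2 ≤ α 0 0 + α 1 1 + α 2 2 -
            max (maxCross α + max (α j k) (α k j))
              (max (α i k + α k i) (max (α k i + α i j) (α j i + α i k))) }
  else ∅

/-- The region `F̂_{ijk}` for an ordering `(i,j,k)` of the three users
(defined to be empty unless `max_{l≠m} α_{lm} ≤ min(α_{ii}, α_{jj})`). -/
noncomputable def Fhat (α : Fin 3 → Fin 3 → ℝ) (i j k : Fin 3) : Set (Fin 3 → ℝ) :=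
  if maxCross α ≤ min (α i i) (α j j) then
    { d | 0 ≤ d 0 ∧ 0 ≤ d 1 ∧ 0 ≤ d 2 ∧
          d 0 ≤ α 0 0 ∧ d 1 ≤ α 1 1 ∧ d 2 ≤ α 2 2 ∧
          d i + d j ≤ α i i + α j j - maxCross α ∧
          d i + d k ≤ α i i + α k k - max (α j k) (max (α k i) (α i k)) ∧
          d j + d k ≤ α j j + α k k - max (α j k) (max (α k i) (α k j)) ∧
          d 0 + d 1 + d 2 ≤ α 0 0 + α 1 1 + α 2 2 -
            max (maxCross α + max (α k i) (α j k))
              (max (α i k + α j i) (max (α k j + α j i)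
                (max (α k j + α i k) ((α i j + α i k + α k j + α j i) / 2)))) }
  else ∅

lemma le_sub_max' {x a b c : ℝ} (hb : x ≤ a - b) (hc : x ≤ a - c) : x ≤ a - max b c := by
  rcases le_total b c with h|h
  · rwa [max_eq_right h]
  · rwa [max_eq_left h]

lemma deltaI_eq (α : Fin 3 → Fin 3 → ℝ) (h1 : CondC1 α) (i : Fin 3) :
    deltaI α i = α i i := by
  refine le_antisymm (ciSup_le fun m => ?_) ?_
  · exact le_trans (le_max_left _ (α i i)) (h1 i i m)
  · exact le_ciSup (Set.Finite.bddAbove (Set.finite_range _)) i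

lemma deltaIJ_eq (α : Fin 3 → Fin 3 → ℝ) (h1 : CondC1 α) (h2 : CondC2 α) (i k : Fin 3) :
    deltaIJ α i k = α i i - α k i := by
  have hki : α k i ≤ α i i := le_trans (le_max_right (α i i) _) (h1 i k i)
  refine le_antisymm (ciSup_le fun m => ?_) ?_
  · have := h2 i k m
    apply max_le <;> linarith
  · have h := le_ciSup (f := fun m => max (α i m - α k m) 0)
      (Set.Finite.bddAbove (Set.finite_range _)) i
    exact le_trans (le_max_left _ 0) h

lemma perm3_cases (p : Equiv.Perm (Fin 3)) :
    (p 0 = 0 ∧ p 1 = 1 ∧ p 2 = 2) ∨ (p 0 = 0 ∧ p 1 = 2 ∧ p 2 = 1) ∨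
    (p 0 = 1 ∧ p 1 = 0 ∧ p 2 = 2) ∨ (p 0 = 1 ∧ p 1 = 2 ∧ p 2 = 0) ∨
    (p 0 = 2 ∧ p 1 = 0 ∧ p 2 = 1) ∨ (p 0 = 2 ∧ p 1 = 1 ∧ p 2 = 0) := by
  revert p; decide
/-- If `α₁₂` is the largest cross link, `α₃₁ ≤ max(α₂₃, α₃₂)` and
`α₂₃ ≤ max(α₁₃, α₃₁)`, then under (C1),(C2) the GDoF region `D` equals `F̂₁₂₃`. -/
theorem Dregion_eq_Fhat123 (α : Fin 3 → Fin 3 → ℝ)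
    (hα : ∀ i m : Fin 3, 0 ≤ α i m) (h1 : CondC1 α) (h2 : CondC2 α)
    (hmax : α 0 1 = maxCross α)
    (hcase1 : α 2 0 ≤ max (α 1 2) (α 2 1))
    (hcase2 : α 1 2 ≤ max (α 0 2) (α 2 0)) :
    Dregion α = Fhat α 0 1 2 := by
  -- cross-link bounds from hmax
  have hm02 : α 0 2 ≤ α 0 1 := by rw [hmax]; simp [maxCross, le_max_iff]
  have hm10 : α 1 0 ≤ α 0 1 := by rw [hmax]; simp [maxCross, le_max_iff]
  have hm12 : α 1 2 ≤ α 0 1 := by rw [hmax]; simp [maxCross, le_max_iff]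
  have hm20 : α 2 0 ≤ α 0 1 := by rw [hmax]; simp [maxCross, le_max_iff]
  have hm21 : α 2 1 ≤ α 0 1 := by rw [hmax]; simp [maxCross, le_max_iff]
  -- diagonal dominance from C1
  have hd : ∀ i m : Fin 3, α i m ≤ α i i := fun i m =>
    le_trans (le_max_left _ (α i i)) (h1 i i m)
  have hd' : ∀ i k : Fin 3, α k i ≤ α i i := fun i k =>
    le_trans (le_max_right (α i i) _) (h1 i k i)
  have hif : maxCross α ≤ min (α 0 0) (α 1 1) := by
    rw [← hmax]; exact le_min (hd 0 1) (hd' 1 0)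
  have dI := deltaI_eq α h1
  have dIJ := deltaIJ_eq α h1 h2
  ext d
  simp only [Dregion, Fhat, if_pos hif, Set.mem_setOf_eq]
  simp only [Set.mem_setOf_eq, ← hmax]
  constructor
  · rintro ⟨hpos, hpair, hsum⟩
    obtain ⟨h0p, h0⟩ := hpos 0
    obtain ⟨h1p, h1b⟩ := hpos 1
    obtain ⟨h2p, h2b⟩ := hpos 2
    rw [dI] at h0 h1b h2b
    have p01 := hpair 0 1 (by decide)
    have p02 := hpair 0 2 (by decide)
    have p12 := hpair 1 2 (by decide)
    simp only [dI, dIJ, le_min_iff] at p01 p02 p12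
    -- sum bounds from deltaTot via explicit permutations
    have S0 := α 0 0 + α 1 1 + α 2 2
    have bdd : BddBelow (Set.range fun p : Equiv.Perm (Fin 3) =>
        min (deltaI α (p 0) + deltaIJ α (p 1) (p 0) + deltaIJ α (p 2) (p 1))
          ((deltaI α (p 0) + deltaI α (p 2) + deltaIJ α (p 0) (p 1) +
            deltaIJ α (p 1) (p 0) + deltaIJ α (p 1) (p 2) + deltaIJ α (p 2) (p 0)) / 2)) :=
      Set.Finite.bddBelow (Set.finite_range _)
    have eval : ∀ p : Equiv.Perm (Fin 3), deltaTot α ≤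
        min (deltaI α (p 0) + deltaIJ α (p 1) (p 0) + deltaIJ α (p 2) (p 1))
          ((deltaI α (p 0) + deltaI α (p 2) + deltaIJ α (p 0) (p 1) +
            deltaIJ α (p 1) (p 0) + deltaIJ α (p 1) (p 2) + deltaIJ α (p 2) (p 0)) / 2) :=
      fun p => ciInf_le bdd p
    have e201 := eval ⟨![2,0,1], ![1,2,0], by decide, by decide⟩
    have e012 := eval (Equiv.refl _)
    have e102 := eval (Equiv.swap 0 1)
    have e210 := eval (Equiv.swap 0 2)
    have e021 := eval (Equiv.swap 1 2)
    simp only [show ((⟨![2,0,1], ![1,2,0], by decide, by decide⟩ : Equiv.Perm (Fin 3)) 0) = 2 from rfl,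
      show ((⟨![2,0,1], ![1,2,0], by decide, by decide⟩ : Equiv.Perm (Fin 3)) 1) = 0 from rfl,
      show ((⟨![2,0,1], ![1,2,0], by decide, by decide⟩ : Equiv.Perm (Fin 3)) 2) = 1 from rfl,
      Equiv.refl_apply,
      show ((Equiv.swap (0:Fin 3) 1) 0) = 1 from by decide,
      show ((Equiv.swap (0:Fin 3) 1) 1) = 0 from by decide,
      show ((Equiv.swap (0:Fin 3) 1) 2) = 2 from by decide,
      show ((Equiv.swap (0:Fin 3) 2) 0) = 2 from by decide,
      show ((Equiv.swap (0:Fin 3) 2) 1) = 1 from by decide,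
      show ((Equiv.swap (0:Fin 3) 2) 2) = 0 from by decide,
      show ((Equiv.swap (1:Fin 3) 2) 0) = 0 from by decide,
      show ((Equiv.swap (1:Fin 3) 2) 1) = 2 from by decide,
      show ((Equiv.swap (1:Fin 3) 2) 2) = 1 from by decide,
      dI, dIJ, le_min_iff] at e201 e012 e102 e210 e021
    have hs := hsum
    refine ⟨h0p, h1p, h2p, h0, h1b, h2b, ?_, ?_, ?_, ?_⟩
    · linarith [p01.1]
    · -- d0+d2 ≤ α00+α22 - max(α12, max(α20, α02))
      refine le_sub_max' ?_ (le_sub_max' ?_ ?_)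
      · rcases le_max_iff.mp hcase2 with h|h
        · linarith [p02.2]
        · linarith [p02.1]
      · linarith [p02.1]
      · linarith [p02.2]
    · refine le_sub_max' ?_ (le_sub_max' ?_ ?_)
      · linarith [p12.2]
      · rcases le_max_iff.mp hcase1 with h|h
        · linarith [p12.2]
        · linarith [p12.1]
      · linarith [p12.1]
    · -- sum bound
      rw [← max_add_add_left (α 0 1) (α 2 0) (α 1 2)]
      refine le_sub_max' (le_sub_max' ?_ ?_) (le_sub_max' ?_ (le_sub_max' ?_ (le_sub_max' ?_ ?_))) <;>
        linarith [e201.1, e012.1, e012.2, e102.1, e210.1, e021.1]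
  · rintro ⟨h0p, h1p, h2p, h0, h1b, h2b, q01, q02, q12, qs⟩
    -- bounds on the big max in the sum constraint
    set F := max (α 0 1 + max (α 2 0) (α 1 2))
        (max (α 0 2 + α 1 0) (max (α 2 1 + α 1 0)
          (max (α 2 1 + α 0 2) ((α 0 1 + α 0 2 + α 2 1 + α 1 0) / 2)))) with hFdef
    have hFA : α 0 1 + max (α 2 0) (α 1 2) ≤ F := le_max_left _ _
    have hF1 : α 0 1 + α 2 0 ≤ F := le_trans (by gcongr; exact le_max_left _ _) hFA
    have hF2 : α 0 1 + α 1 2 ≤ F := le_trans (by gcongr; exact le_max_right _ _) hFA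
    have hF3 : α 0 2 + α 1 0 ≤ F := le_trans (le_max_left _ _) (le_max_right _ _)
    have hF4 : α 2 1 + α 1 0 ≤ F :=
      le_trans (le_trans (le_max_left _ _) (le_max_right _ _)) (le_max_right _ _)
    have hF5 : α 2 1 + α 0 2 ≤ F :=
      le_trans (le_trans (le_trans (le_max_left _ _) (le_max_right _ _)) (le_max_right _ _))
        (le_max_right _ _)
    have hF6 : (α 0 1 + α 0 2 + α 2 1 + α 1 0) / 2 ≤ F :=
      le_trans (le_trans (le_trans (le_max_right _ _) (le_max_right _ _)) (le_max_right _ _))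
        (le_max_right _ _)
    have q02a : d 0 + d 2 ≤ α 0 0 + α 2 2 - α 0 2 := by
      have := le_max_left (α 0 2) (α 2 0)
      have h' := le_max_right (α 1 2) (max (α 2 0) (α 0 2))
      have h'' := le_max_right (α 2 0) (α 0 2)
      linarith [le_trans h'' h']
    have q02b : d 0 + d 2 ≤ α 0 0 + α 2 2 - α 2 0 := by
      have h' := le_max_right (α 1 2) (max (α 2 0) (α 0 2))
      have h'' := le_max_left (α 2 0) (α 0 2)
      linarith [le_trans h'' h']
    have q12a : d 1 + d 2 ≤ α 1 1 + α 2 2 - α 1 2 := by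
      have h' := le_max_left (α 1 2) (max (α 2 0) (α 2 1))
      linarith
    have q12b : d 1 + d 2 ≤ α 1 1 + α 2 2 - α 2 1 := by
      have h' := le_max_right (α 1 2) (max (α 2 0) (α 2 1))
      have h'' := le_max_right (α 2 0) (α 2 1)
      linarith [le_trans h'' h']
    refine ⟨fun i => ?_, fun i k hik => ?_, ?_⟩
    · rw [dI]
      have hi : i = 0 ∨ i = 1 ∨ i = 2 := by omega
      rcases hi with rfl|rfl|rfl
      · exact ⟨h0p, h0⟩
      · exact ⟨h1p, h1b⟩
      · exact ⟨h2p, h2b⟩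
    · simp only [dI, dIJ, le_min_iff]
      have hi : i = 0 ∨ i = 1 ∨ i = 2 := by omega
      have hk : k = 0 ∨ k = 1 ∨ k = 2 := by omega
      rcases hi with rfl|rfl|rfl <;> rcases hk with rfl|rfl|rfl <;>
        first
          | exact absurd rfl hik
          | (constructor <;> linarith)
    · rw [deltaTot]
      refine le_ciInf fun p => ?_
      rcases perm3_cases p with ⟨e0,e1,e2⟩|⟨e0,e1,e2⟩|⟨e0,e1,e2⟩|⟨e0,e1,e2⟩|⟨e0,e1,e2⟩|⟨e0,e1,e2⟩ <;>
        rw [e0, e1, e2] <;> simp only [dI, dIJ] <;> refine le_min ?_ ?_ <;> linarith
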